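/- If the norm of X is Gâteaux differentiable at z − P_K(z) for a point z ∈ E'(K), then ∂d_K(z) equals the (singleton) subdifferential of the norm at z − P_K(z), hence d_K is strictly differentiable at z. -/

import Mathlib

open Filter Topology Metric NNReal

noncomputable section

variable {X : Type*}

/-- The distance function generated by a set `K`. -/
def dK [NormedAddCommGroup X] (K : Set X) (x : X) : ℝ := Metric.infDist x K

/-- The set of nearest points (metric projection) of `z` in `K`. -/
def nearPts [NormedAddCommGroup X] (K : Set X) (z : X) : Set X :=
  {p | p ∈ K ∧ ‖z - p‖ = Metric.infDist z K}

/-- The Clarke generalized directional derivative of `h` at `x` in direction `y`. -/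
def clarkeDeriv [NormedAddCommGroup X] [NormedSpace ℝ X] (h : X → ℝ) (x y : X) : ℝ :=
  Filter.limsup (fun p : X × ℝ => (h (p.1 + p.2 • y) - h p.1) / p.2)
    ((𝓝 x) ×ˢ (𝓝[>] (0 : ℝ)))

/-- The Clarke generalized subdifferential of `h` at `x`. -/
def clarkeSubdiff [NormedAddCommGroup X] [NormedSpace ℝ X] (h : X → ℝ) (x : X) :
    Set (X →L[ℝ] ℝ) :=
  {f | ∀ y : X, f y ≤ clarkeDeriv h x y}

/-- `h` has Gâteaux derivative `f` at `x`. -/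
def HasGDeriv [NormedAddCommGroup X] [NormedSpace ℝ X] (h : X → ℝ) (f : X →L[ℝ] ℝ)
    (x : X) : Prop :=
  ∀ y : X, Tendsto (fun t : ℝ => (h (x + t • y) - h x) / t) (𝓝[≠] (0 : ℝ)) (𝓝 (f y))

/-- The subdifferential of the norm at `v`: norm-one functionals attaining the norm at `v`. -/
def normSubdiff [NormedAddCommGroup X] [NormedSpace ℝ X] (v : X) : Set (X →L[ℝ] ℝ) :=
  {f | ‖f‖ = 1 ∧ f v = ‖v‖}

/-- The norm of `X` is Gâteaux differentiable off `0`. -/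
def GateauxSmoothNorm (X : Type*) [NormedAddCommGroup X] [NormedSpace ℝ X] : Prop :=
  ∀ x : X, x ≠ 0 → ∃ f : X →L[ℝ] ℝ, HasGDeriv (fun v : X => ‖v‖) f x

/-- The norm of `X` is Fréchet differentiable off `0`. -/
def FrechetSmoothNorm (X : Type*) [NormedAddCommGroup X] [NormedSpace ℝ X] : Prop :=
  ∀ x : X, x ≠ 0 → ∃ f : X →L[ℝ] ℝ, HasFDerivAt (fun v : X => ‖v‖) f x

/-- The norm of `X` is locally uniformly rotund (LUR). -/
def LURNorm (X : Type*) [NormedAddCommGroup X] : Prop :=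
  ∀ x : X, ‖x‖ = 1 → ∀ u : ℕ → X, (∀ n, ‖u n‖ = 1) →
    Tendsto (fun n => ‖u n + x‖) atTop (𝓝 (2 : ℝ)) → Tendsto u atTop (𝓝 x)

/-- `E(K)`: points outside `K` having a nearest point in `K`. -/
def ESet [NormedAddCommGroup X] (K : Set X) : Set X :=
  {z | z ∉ K ∧ (nearPts K z).Nonempty}

/-- `E'(K)`: points outside `K` all of whose minimizing sequences in `K` converge to a
unique nearest point. -/
def EPrime [NormedAddCommGroup X] (K : Set X) : Set X :=
  {z | z ∉ K ∧ ∃ p ∈ K, ‖z - p‖ = Metric.infDist z K ∧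
    ∀ k : ℕ → X, (∀ n, k n ∈ K) →
      Tendsto (fun n => ‖z - k n‖) atTop (𝓝 (Metric.infDist z K)) →
      Tendsto k atTop (𝓝 p)}

/-- `K` is a sun at `x` with nearest point `p`. -/
def IsSunAt [NormedAddCommGroup X] [NormedSpace ℝ X] (K : Set X) (x p : X) : Prop :=
  p ∈ nearPts K x ∧ ∀ t : ℝ, 0 ≤ t → p ∈ nearPts K (x + (t / ‖x - p‖) • (x - p))

/-- `K` is an almost sun: the sun property holds on a dense subset of `X ∖ K`. -/
def AlmostSun [NormedAddCommGroup X] [NormedSpace ℝ X] (K : Set X) : Prop :=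
  ∀ x : X, x ∉ K → x ∈ closure {z | z ∉ K ∧ ∃ p, IsSunAt K z p}

/-- `K` is a sun. -/
def IsSun [NormedAddCommGroup X] [NormedSpace ℝ X] (K : Set X) : Prop :=
  ∀ x : X, x ∉ K → ∃ p, IsSunAt K x p

/-- `K` is almost proximinal: nearest points exist on a dense subset of `X ∖ K`. -/
def AlmostProximinal [NormedAddCommGroup X] (K : Set X) : Prop :=
  ∀ x : X, x ∉ K → x ∈ closure (ESet K)

/-- `K` is proximinal: every point outside `K` has a nearest point in `K`. -/
def Proximinal [NormedAddCommGroup X] (K : Set X) : Prop :=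
  ∀ x : X, x ∉ K → (nearPts K x).Nonempty

/-- `K` is Chebyshev: every point outside `K` has a unique nearest point in `K`. -/
def Chebyshev [NormedAddCommGroup X] (K : Set X) : Prop :=
  ∀ x : X, x ∉ K → ∃! p, p ∈ nearPts K x

/-- The set `E_r(K)`. -/
def Er [NormedAddCommGroup X] [NormedSpace ℝ X] (K : Set X) (r : ℝ) : Set X :=
  {x | ∃ x₀ p : X, p ∈ nearPts K x₀ ∧ r < Metric.infDist x₀ K ∧
    x = x₀ - (r / ‖x₀ - p‖) • (x₀ - p)}

/-- `h` is uniformly Gâteaux differentiable on `D` with derivative map `g`. -/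
def UniformGateauxOn [NormedAddCommGroup X] [NormedSpace ℝ X]
    (h : X → ℝ) (g : X → X →L[ℝ] ℝ) (D : Set X) : Prop :=
  ∀ ε > (0 : ℝ), ∀ y : X, ‖y‖ = 1 → ∃ δ > (0 : ℝ), ∀ x ∈ D, ∀ t : ℝ,
    t ≠ 0 → |t| < δ → |(h (x + t • y) - h x) / t - g x y| < ε

/-- `h` is uniformly Fréchet differentiable on `D` with derivative map `g`. -/
def UniformFrechetOn [NormedAddCommGroup X] [NormedSpace ℝ X]
    (h : X → ℝ) (g : X → X →L[ℝ] ℝ) (D : Set X) : Prop :=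
  ∀ ε > (0 : ℝ), ∃ δ > (0 : ℝ), ∀ x ∈ D, ∀ y : X, ‖y‖ = 1 → ∀ t : ℝ,
    t ≠ 0 → |t| < δ → |(h (x + t • y) - h x) / t - g x y| < ε

/-- The norm of `X` is uniformly Gâteaux smooth (on the unit sphere). -/
def UniformGateauxSmoothNorm (X : Type*) [NormedAddCommGroup X] [NormedSpace ℝ X] : Prop :=
  ∃ g : X → X →L[ℝ] ℝ, UniformGateauxOn (fun v : X => ‖v‖) g {x : X | ‖x‖ = 1}

/-- The norm of `X` is uniformly Fréchet smooth (on the unit sphere). -/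
def UniformFrechetSmoothNorm (X : Type*) [NormedAddCommGroup X] [NormedSpace ℝ X] : Prop :=
  ∃ g : X → X →L[ℝ] ℝ, UniformFrechetOn (fun v : X => ‖v‖) g {x : X | ‖x‖ = 1}

/-!
Let `v = z - p` and let `f` be the Gâteaux derivative of the norm at `v`. By convexity of the
norm, `f` is the only norm-one functional with `f v = ‖v‖`, so it suffices to show that the Clarke
derivative of `d_K` at `z` is `f` in every direction `y`.

The lower bound comes from `d_K z - d_K (z - t y) ≥ ‖v‖ - ‖v - t y‖`, i.e. from approaching `z`
from behind. For the upper bound, `z ∈ E'(K)` forces almost-nearest points `q ∈ K` of points `x`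
near `z` to lie near `p`; then `d_K (x + t y) - d_K x ≤ ‖x - q + t y‖ - ‖x - q‖` up to an
arbitrarily small multiple of `t`, and by convexity the quotient by `t` is at most the slope at a
fixed `s > 0`, which depends continuously on `(x, q)` and is close to `f y` at `(z, p)`.
-/

section NormedSpace

variable [NormedAddCommGroup X] [NormedSpace ℝ X]

theorem convexOn_norm_add_smul (w y : X) : ConvexOn ℝ Set.univ (fun t : ℝ => ‖w + t • y‖) := by
  have hline : (fun t : ℝ => ‖w + t • y‖) = norm ∘ AffineMap.lineMap w (w + y) := by
    ext t
    simp [AffineMap.lineMap_apply_module', add_comm]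
  rw [hline]
  exact convexOn_univ_norm.comp_affineMap _

theorem norm_add_smul_slope_mono (w y : X) {t s : ℝ} (ht : 0 < t) (hts : t ≤ s) :
    (‖w + t • y‖ - ‖w‖) / t ≤ (‖w + s • y‖ - ‖w‖) / s := by
  simpa using (convexOn_norm_add_smul w y).secant_mono (a := 0) trivial trivial trivial
    ht.ne' (ht.trans_le hts).ne' hts

theorem ContinuousLinearMap.eq_of_forall_apply_le {f g : X →L[ℝ] ℝ} (h : ∀ y, g y ≤ f y) :
    g = f :=
  ContinuousLinearMap.ext fun y => le_antisymm (h y) <| by simpa using h (-y)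

namespace HasGDeriv

variable {v : X} {f : X →L[ℝ] ℝ}

theorem tendsto_slope_nhdsGT (hf : HasGDeriv (fun x : X => ‖x‖) f v) (y : X) :
    Tendsto (fun t : ℝ => (‖v + t • y‖ - ‖v‖) / t) (𝓝[>] 0) (𝓝 (f y)) :=
  (hf y).mono_left (nhdsWithin_mono 0 fun _ ht => ne_of_gt ht)

theorem apply_le_slope (hf : HasGDeriv (fun x : X => ‖x‖) f v) (y : X) {s : ℝ} (hs : 0 < s) :
    f y ≤ (‖v + s • y‖ - ‖v‖) / s := by
  refine le_of_tendsto (hf.tendsto_slope_nhdsGT y) ?_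
  filter_upwards [Ioo_mem_nhdsGT hs] with t ht
  exact norm_add_smul_slope_mono v y ht.1 ht.2.le

theorem apply_le_norm (hf : HasGDeriv (fun x : X => ‖x‖) f v) (y : X) : f y ≤ ‖y‖ := by
  have h := hf.apply_le_slope y one_pos
  simp only [one_smul, div_one] at h
  linarith [norm_add_le v y]

theorem apply_self (hf : HasGDeriv (fun x : X => ‖x‖) f v) : f v = ‖v‖ := by
  refine tendsto_nhds_unique (hf.tendsto_slope_nhdsGT v) (tendsto_const_nhds.congr' ?_)
  filter_upwards [self_mem_nhdsWithin] with t (ht : 0 < t)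
  have hray : v + t • v = (1 + t) • v := by rw [add_smul, one_smul]
  rw [hray, norm_smul, Real.norm_of_nonneg (by positivity)]
  field_simp
  ring

theorem norm_eq_one (hf : HasGDeriv (fun x : X => ‖x‖) f v) (hv : v ≠ 0) : ‖f‖ = 1 := by
  refine le_antisymm (f.opNorm_le_bound zero_le_one fun y => ?_) ?_
  · rw [Real.norm_eq_abs, one_mul, abs_le]
    exact ⟨by linarith [hf.apply_le_norm (-y), f.map_neg y, norm_neg y], hf.apply_le_norm y⟩
  · have h : ‖v‖ ≤ ‖f‖ * ‖v‖ := by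
      simpa [hf.apply_self] using (le_abs_self (f v)).trans (f.le_opNorm v)
    exact (le_mul_iff_one_le_left (norm_pos_iff.mpr hv)).mp h

theorem normSubdiff_eq_singleton (hf : HasGDeriv (fun x : X => ‖x‖) f v) (hv : v ≠ 0) :
    normSubdiff v = {f} := by
  ext g
  refine ⟨fun ⟨hg, hgv⟩ => ContinuousLinearMap.eq_of_forall_apply_le fun y => ?_,
    fun hg => hg ▸ ⟨hf.norm_eq_one hv, hf.apply_self⟩⟩
  refine ge_of_tendsto (hf.tendsto_slope_nhdsGT y) ?_
  filter_upwards [self_mem_nhdsWithin] with t (ht : 0 < t)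
  have hle : g (v + t • y) ≤ ‖v + t • y‖ := by
    simpa [hg] using (le_abs_self _).trans (g.le_opNorm (v + t • y))
  rw [map_add, map_smul, hgv, smul_eq_mul] at hle
  rw [le_div_iff₀ ht]
  linarith

end HasGDeriv

end NormedSpace

section Clarke

variable [NormedAddCommGroup X] [NormedSpace ℝ X] {h : X → ℝ} {L : ℝ≥0}

theorem LipschitzWith.abs_diffQuot_le (hh : LipschitzWith L h) (x y : X) {t : ℝ} (ht : 0 < t) :
    |(h (x + t • y) - h x) / t| ≤ L * ‖y‖ := by
  have hd := hh.dist_le_mul (x + t • y) x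
  rw [Real.dist_eq, dist_eq_norm, add_sub_cancel_left, norm_smul, Real.norm_of_nonneg ht.le]
    at hd
  rw [abs_div, abs_of_pos ht, div_le_iff₀ ht]
  linarith

theorem LipschitzWith.eventually_abs_diffQuot_le (hh : LipschitzWith L h) (x y : X) :
    ∀ᶠ q : X × ℝ in 𝓝 x ×ˢ 𝓝[>] 0, |(h (q.1 + q.2 • y) - h q.1) / q.2| ≤ L * ‖y‖ := by
  filter_upwards [prod_mem_prod univ_mem self_mem_nhdsWithin] with q hq
  exact hh.abs_diffQuot_le q.1 y hq.2

variable {x y : X}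

theorem clarkeDeriv_le_of_eventually_le (hh : LipschitzWith L h) {c : ℝ}
    (hc : ∀ᶠ q : X × ℝ in 𝓝 x ×ˢ 𝓝[>] 0, (h (q.1 + q.2 • y) - h q.1) / q.2 ≤ c) :
    clarkeDeriv h x y ≤ c := by
  refine limsup_le_of_le (IsBoundedUnder.isCoboundedUnder_le ⟨-(L * ‖y‖), ?_⟩) hc
  rw [eventually_map]
  filter_upwards [hh.eventually_abs_diffQuot_le x y] with q hq
  exact (abs_le.mp hq).1

theorem le_clarkeDeriv_of_tendsto (hh : LipschitzWith L h) {φ : ℝ → X}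
    (hφ : Tendsto φ (𝓝[>] 0) (𝓝 x)) {g : ℝ → ℝ} {c : ℝ} (hg : Tendsto g (𝓝[>] 0) (𝓝 c))
    (hle : ∀ᶠ t in 𝓝[>] 0, g t ≤ (h (φ t + t • y) - h (φ t)) / t) :
    c ≤ clarkeDeriv h x y := by
  set u : X × ℝ → ℝ := fun q => (h (q.1 + q.2 • y) - h q.1) / q.2
  have hψ : Tendsto (fun t => (φ t, t)) (𝓝[>] 0) (𝓝 x ×ˢ 𝓝[>] 0) :=
    hφ.prodMk tendsto_id
  have hbdd : ∀ᶠ q in 𝓝 x ×ˢ 𝓝[>] 0, |u q| ≤ L * ‖y‖ := hh.eventually_abs_diffQuot_le x y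
  calc c = limsup g (𝓝[>] 0) := hg.limsup_eq.symm
    _ ≤ limsup (fun t => u (φ t, t)) (𝓝[>] 0) :=
        limsup_le_limsup hle hg.isCoboundedUnder_le
          ⟨L * ‖y‖, eventually_map.mpr <| (hψ.eventually hbdd).mono fun _ ht => (abs_le.mp ht).2⟩
    _ ≤ limsup u (𝓝 x ×ˢ 𝓝[>] 0) :=
        limsup_le_limsup_of_le hψ
          (IsBoundedUnder.isCoboundedUnder_le ⟨-(L * ‖y‖), eventually_map.mpr <|
            (hψ.eventually hbdd).mono fun _ ht => (abs_le.mp ht).1⟩)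
          ⟨L * ‖y‖, eventually_map.mpr <| hbdd.mono fun _ hq => (abs_le.mp hq).2⟩

theorem clarkeSubdiff_eq_singleton {f : X →L[ℝ] ℝ} (hf : ∀ y, clarkeDeriv h x y = f y) :
    clarkeSubdiff h x = {f} := by
  ext g
  simp only [clarkeSubdiff, Set.mem_ofPred_eq, Set.mem_singleton_iff, hf]
  exact ⟨ContinuousLinearMap.eq_of_forall_apply_le, fun hg _ => hg ▸ le_rfl⟩

end Clarke

section NearestPoints

variable [NormedAddCommGroup X] {K : Set X} {z p : X}

theorem lipschitzWith_dK (K : Set X) : LipschitzWith 1 (dK K) :=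
  lipschitz_infDist_pt K

theorem tendsto_of_almost_nearest_of_minimizing
    (hmin : ∀ k : ℕ → X, (∀ n, k n ∈ K) →
      Tendsto (fun n => ‖z - k n‖) atTop (𝓝 (infDist z K)) → Tendsto k atTop (𝓝 p))
    {x q : ℕ → X} {e : ℕ → ℝ} (hx : Tendsto x atTop (𝓝 z)) (hqK : ∀ n, q n ∈ K)
    (he : Tendsto e atTop (𝓝 0)) (hq : ∀ n, ‖x n - q n‖ ≤ infDist (x n) K + e n) :
    Tendsto q atTop (𝓝 p) := by
  refine hmin q hqK (tendsto_of_tendsto_of_tendsto_of_le_of_le tendsto_const_nhds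
    (g := fun n => infDist z K) (h := fun n => dist z (x n) + (infDist (x n) K + e n)) ?_
    (fun n => ?_) (fun n => ?_))
  · simpa using ((tendsto_const_nhds (x := z)).dist hx).add
      (((continuous_infDist_pt K).tendsto z).comp hx |>.add he)
  · simpa [dist_eq_norm] using infDist_le_dist_of_mem (x := z) (hqK n)
  · calc ‖z - q n‖ = dist z (q n) := (dist_eq_norm _ _).symm
      _ ≤ dist z (x n) + ‖x n - q n‖ := dist_eq_norm (x n) (q n) ▸ dist_triangle _ _ _
      _ ≤ dist z (x n) + (infDist (x n) K + e n) := by gcongr; exact hq n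

theorem exists_dist_lt_of_almost_nearest_of_minimizing
    (hmin : ∀ k : ℕ → X, (∀ n, k n ∈ K) →
      Tendsto (fun n => ‖z - k n‖) atTop (𝓝 (infDist z K)) → Tendsto k atTop (𝓝 p))
    {δ : ℝ} (hδ : 0 < δ) :
    ∃ η > 0, ∀ x q, dist x z < η → q ∈ K → ‖x - q‖ ≤ infDist x K + η → dist q p < δ := by
  by_contra! H
  choose x q hx hqK hq hqp using fun n : ℕ => H (1 / (n + 1)) Nat.one_div_pos_of_nat
  have he : Tendsto (fun n : ℕ => 1 / ((n : ℝ) + 1)) atTop (𝓝 0) :=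
    tendsto_one_div_add_atTop_nhds_zero_nat
  have hxz : Tendsto x atTop (𝓝 z) := tendsto_iff_dist_tendsto_zero.mpr <|
    squeeze_zero (fun _ => dist_nonneg) (fun n => (hx n).le) he
  have hqp' := tendsto_iff_dist_tendsto_zero.mp
    (tendsto_of_almost_nearest_of_minimizing hmin hxz hqK he hq)
  obtain ⟨n, hn⟩ := (hqp'.eventually (gt_mem_nhds hδ)).exists
  exact (hqp n).not_gt hn

variable [NormedSpace ℝ X] {f : X →L[ℝ] ℝ}

theorem dK_diffQuot_le {x q : X} (y : X) (hq : q ∈ K) {t r : ℝ} (ht : 0 < t)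
    (hxq : ‖x - q‖ ≤ dK K x + t * r) :
    (dK K (x + t • y) - dK K x) / t ≤ (‖x - q + t • y‖ - ‖x - q‖) / t + r := by
  have hdist : dK K (x + t • y) ≤ ‖x - q + t • y‖ := by
    simpa [dK, dist_eq_norm, add_sub_right_comm] using infDist_le_dist_of_mem (x := x + t • y) hq
  rw [div_add' _ _ _ ht.ne', div_le_div_iff_of_pos_right ht]
  linarith

theorem clarkeDeriv_dK_le (hpK : p ∈ K)
    (hmin : ∀ k : ℕ → X, (∀ n, k n ∈ K) →
      Tendsto (fun n => ‖z - k n‖) atTop (𝓝 (infDist z K)) → Tendsto k atTop (𝓝 p))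
    (hf : HasGDeriv (fun x : X => ‖x‖) f (z - p)) (y : X) :
    clarkeDeriv (dK K) z y ≤ f y := by
  refine le_of_forall_pos_le_add fun ε hε => ?_
  obtain ⟨s, hs, hslope⟩ : ∃ s > 0, (‖z - p + s • y‖ - ‖z - p‖) / s < f y + ε / 2 :=
    ((eventually_mem_nhdsWithin.and <| (hf.tendsto_slope_nhdsGT y).eventually
      (gt_mem_nhds (by linarith))).exists)
  obtain ⟨δ, hδ, hδslope⟩ : ∃ δ > 0, ∀ x q : X, dist x z < δ → dist q p < δ →
      (‖x - q + s • y‖ - ‖x - q‖) / s < f y + ε / 2 := by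
    have hcont : Continuous fun w : X × X => (‖w.1 - w.2 + s • y‖ - ‖w.1 - w.2‖) / s := by
      fun_prop
    obtain ⟨δ, hδ, hball⟩ := Metric.eventually_nhds_iff.mp
      ((hcont.tendsto (z, p)).eventually (gt_mem_nhds hslope))
    exact ⟨δ, hδ, fun x q hx hq => hball (show dist (x, q) (z, p) < δ by
      rw [Prod.dist_eq]
      exact max_lt hx hq)⟩
  obtain ⟨η, hη, hnear⟩ := exists_dist_lt_of_almost_nearest_of_minimizing hmin hδ
  refine clarkeDeriv_le_of_eventually_le (lipschitzWith_dK K) ?_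
  filter_upwards [prod_mem_prod (ball_mem_nhds z (lt_min hδ hη)) (Ioo_mem_nhdsGT hs)]
    with ⟨x, t⟩ ⟨hx, ht⟩
  obtain ⟨q, hqK, hxq⟩ := (infDist_lt_iff ⟨p, hpK⟩).mp <|
    lt_add_of_pos_right (infDist x K) (lt_min hη (mul_pos ht.1 (half_pos hε)))
  rw [dist_eq_norm] at hxq
  have hqp : dist q p < δ := hnear x q (lt_of_lt_of_le hx (min_le_right _ _)) hqK
    (hxq.le.trans (add_le_add_right (min_le_left _ _) _))
  calc (dK K (x + t • y) - dK K x) / t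
      ≤ (‖x - q + t • y‖ - ‖x - q‖) / t + ε / 2 :=
        dK_diffQuot_le y hqK ht.1 (hxq.le.trans (add_le_add_right (min_le_right _ _) _))
    _ ≤ (‖x - q + s • y‖ - ‖x - q‖) / s + ε / 2 := by
        linarith [norm_add_smul_slope_mono (x - q) y ht.1 ht.2.le]
    _ ≤ f y + ε := by linarith [hδslope x q (lt_of_lt_of_le hx (min_le_left _ _)) hqp]

theorem le_clarkeDeriv_dK (hp : p ∈ nearPts K z) (hf : HasGDeriv (fun x : X => ‖x‖) f (z - p))
    (y : X) : f y ≤ clarkeDeriv (dK K) z y := by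
  have hg : Tendsto (fun t : ℝ => -((‖z - p + t • -y‖ - ‖z - p‖) / t)) (𝓝[>] 0) (𝓝 (f y)) := by
    simpa using (hf.tendsto_slope_nhdsGT (-y)).neg
  have hφ : Tendsto (fun t : ℝ => z - t • y) (𝓝[>] 0) (𝓝 z) := by
    have hcont : Continuous fun t : ℝ => z - t • y := by fun_prop
    simpa using (hcont.tendsto 0).mono_left nhdsWithin_le_nhds
  refine le_clarkeDeriv_of_tendsto (lipschitzWith_dK K) hφ hg ?_
  filter_upwards [self_mem_nhdsWithin] with t (ht : 0 < t)
  have hdz : dK K z = ‖z - p‖ := hp.2.symm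
  have hdzt : dK K (z - t • y) ≤ ‖z - p + t • -y‖ := by
    simpa [dK, dist_eq_norm, sub_right_comm, ← sub_eq_add_neg] using
      infDist_le_dist_of_mem (x := z - t • y) hp.1
  rw [sub_add_cancel, ← neg_div, div_le_div_iff_of_pos_right ht]
  linarith

end NearestPoints

theorem clarke_subdiff_eq_norm_subdiff_of_smooth_general
    [NormedAddCommGroup X] [NormedSpace ℝ X] (K : Set X) (z p : X) (hz : z ∉ K)
    (hp : p ∈ nearPts K z)
    (hmin : ∀ k : ℕ → X, (∀ n, k n ∈ K) →
      Tendsto (fun n => ‖z - k n‖) atTop (𝓝 (Metric.infDist z K)) →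
      Tendsto k atTop (𝓝 p))
    (hsm : ∃ f₀ : X →L[ℝ] ℝ, HasGDeriv (fun v : X => ‖v‖) f₀ (z - p)) :
    clarkeSubdiff (dK K) z = normSubdiff (z - p) ∧
      ∃ f : X →L[ℝ] ℝ, clarkeSubdiff (dK K) z = {f} := by
  obtain ⟨f, hf⟩ := hsm
  have hzp : z - p ≠ 0 := sub_ne_zero.mpr fun h => hz (h ▸ hp.1)
  have hclarke : clarkeSubdiff (dK K) z = {f} := clarkeSubdiff_eq_singleton fun y =>
    le_antisymm (clarkeDeriv_dK_le hp.1 hmin hf y) (le_clarkeDeriv_dK hp hf y)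
  exact ⟨hclarke.trans (hf.normSubdiff_eq_singleton hzp).symm, f, hclarke⟩

theorem clarke_subdiff_eq_norm_subdiff_of_smooth
    [NormedAddCommGroup X] [NormedSpace ℝ X] (K : Set X) (hK : K.Nonempty)
    (hcl : IsClosed K) (z p : X) (hz : z ∉ K) (hp : p ∈ nearPts K z)
    (hmin : ∀ k : ℕ → X, (∀ n, k n ∈ K) →
      Tendsto (fun n => ‖z - k n‖) atTop (𝓝 (Metric.infDist z K)) →
      Tendsto k atTop (𝓝 p))
    (hsm : ∃ f₀ : X →L[ℝ] ℝ, HasGDeriv (fun v : X => ‖v‖) f₀ (z - p)) :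
    clarkeSubdiff (dK K) z = normSubdiff (z - p) ∧
      ∃ f : X →L[ℝ] ℝ, clarkeSubdiff (dK K) z = {f} :=
  clarke_subdiff_eq_norm_subdiff_of_smooth_general K z p hz hp hmin hsm
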